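/- arXiv:1810.00412 — 5 statements merged into one kernel-verified Lean document; each statement's English description precedes it below -/
import Mathlib

section
/- For a fixed p×p real matrix A with A^T A ≠ 0, the function f(X) = 1/tr(X^{-1} A^T A) is concave on the cone of p×p symmetric positive definite matrices. -/
/-!
For `B = Aᵀ A` and positive definite `W`, `Z`, a Cauchy–Schwarz inequality gives
`tr(Z⁻¹ B)² ≤ tr(W⁻¹ B) · tr(Z⁻¹ W Z⁻¹ B)`. Hence `W ↦ tr(W⁻¹ B)⁻¹` lies below the linear function
`W ↦ tr(Z⁻¹ W Z⁻¹ B) / tr(Z⁻¹ B)²`, with equality at `W = Z`. Being an infimum of linear functions,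
it is concave: take `Z` to be the convex combination itself.
-/

open Matrix

namespace Matrix

lemma PosDef.smul_add_one_sub_smul {n : Type*} {X Y : Matrix n n ℝ} (hX : X.PosDef)
    (hY : Y.PosDef) {t : ℝ} (ht₀ : 0 ≤ t) (ht₁ : t ≤ 1) : (t • X + (1 - t) • Y).PosDef := by
  rcases ht₁.lt_or_eq with ht₁ | rfl
  · exact (hY.smul (sub_pos.mpr ht₁)).posSemidef_add (hX.posSemidef.smul ht₀)
  · simpa using hX

variable {m n : Type*} [Fintype m] [Fintype n]

lemma trace_mul_transpose_mul_self_nonneg {P : Matrix n n ℝ} (hP : P.PosSemidef)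
    (A : Matrix m n ℝ) : 0 ≤ (P * (Aᵀ * A)).trace := by
  rw [← Matrix.mul_assoc, trace_mul_comm, ← Matrix.mul_assoc]
  simpa using (hP.mul_mul_conjTranspose_same A).trace_nonneg

variable [DecidableEq n]

lemma trace_smul_inv_sub_conj_mul {W : Matrix n n ℝ} (hW : IsUnit W) (C B : Matrix n n ℝ)
    (x : ℝ) :
    ((x • W⁻¹ - C) * W * (x • W⁻¹ - C) * B).trace
      = (W⁻¹ * B).trace * (x * x) + -2 * (C * B).trace * x + (C * W * C * B).trace := by
  have hinv_mul : W⁻¹ * W = 1 := nonsing_inv_mul W ((isUnit_iff_isUnit_det W).mp hW)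
  have hmul_inv : W * W⁻¹ = 1 := mul_nonsing_inv W ((isUnit_iff_isUnit_det W).mp hW)
  simp only [sub_mul, mul_sub, smul_mul_assoc, mul_smul_comm, hinv_mul, Matrix.mul_assoc, hmul_inv,
    Matrix.one_mul, Matrix.mul_one, trace_sub, trace_smul, smul_eq_mul]
  ring

/-- The quadratic `x ↦ tr((x W⁻¹ - C) W (x W⁻¹ - C) Aᵀ A)` is nonnegative, so its discriminant
is nonpositive. -/
lemma trace_mul_transpose_mul_self_sq_le {W : Matrix n n ℝ} (hW : W.PosDef) {C : Matrix n n ℝ}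
    (hC : C.IsHermitian) (A : Matrix m n ℝ) :
    (C * (Aᵀ * A)).trace ^ 2 ≤ (W⁻¹ * (Aᵀ * A)).trace * (C * W * C * (Aᵀ * A)).trace := by
  have hquad : ∀ x : ℝ, 0 ≤ (W⁻¹ * (Aᵀ * A)).trace * (x * x) + -2 * (C * (Aᵀ * A)).trace * x
      + (C * W * C * (Aᵀ * A)).trace := fun x ↦ by
    have hM : (x • W⁻¹ - C).IsHermitian := (hW.inv.isHermitian.smul (.all x)).sub hC
    rw [← trace_smul_inv_sub_conj_mul hW.isUnit]
    refine trace_mul_transpose_mul_self_nonneg ?_ A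
    simpa only [hM.eq] using hW.posSemidef.conjTranspose_mul_mul_same (x • W⁻¹ - C)
  have hdiscr := discrim_le_zero hquad
  rw [discrim] at hdiscr
  linarith

lemma trace_inv_mul_transpose_mul_self_pos {W : Matrix n n ℝ} (hW : W.PosDef)
    {A : Matrix m n ℝ} (hA : Aᵀ * A ≠ 0) : 0 < (W⁻¹ * (Aᵀ * A)).trace := by
  have hB : (Aᵀ * A).PosSemidef := by simpa using posSemidef_conjTranspose_mul_self A
  have htr : 0 < (Aᵀ * A).trace := hB.trace_nonneg.lt_of_ne' (hB.trace_eq_zero_iff.not.mpr hA)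
  have hCS := trace_mul_transpose_mul_self_sq_le hW isHermitian_one A
  simp only [Matrix.one_mul, Matrix.mul_one] at hCS
  refine (trace_mul_transpose_mul_self_nonneg hW.inv.posSemidef A).lt_of_ne' fun h ↦ ?_
  rw [h, zero_mul] at hCS
  nlinarith

lemma inv_trace_inv_mul_le {W Z : Matrix n n ℝ} (hW : W.PosDef) (hZ : Z.PosDef)
    {A : Matrix m n ℝ} (hA : Aᵀ * A ≠ 0) :
    ((W⁻¹ * (Aᵀ * A)).trace)⁻¹
      ≤ (Z⁻¹ * W * Z⁻¹ * (Aᵀ * A)).trace / (Z⁻¹ * (Aᵀ * A)).trace ^ 2 := by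
  rw [inv_eq_one_div, div_le_div_iff₀ (trace_inv_mul_transpose_mul_self_pos hW hA)
    (pow_pos (trace_inv_mul_transpose_mul_self_pos hZ hA) 2)]
  linarith [trace_mul_transpose_mul_self_sq_le hW hZ.inv.isHermitian A]

end Matrix

/-- `X ↦ 1/tr(X⁻¹ Aᵀ A)` is concave on positive definite matrices. -/
theorem concave_inv_trace_inv (p d : ℕ) (A : Matrix (Fin d) (Fin p) ℝ)
    (hA : Aᵀ * A ≠ 0) :
    ∀ (X Y : Matrix (Fin p) (Fin p) ℝ), X.PosDef → Y.PosDef →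
      ∀ t : ℝ, 0 ≤ t → t ≤ 1 →
        t * ((X⁻¹ * (Aᵀ * A)).trace)⁻¹ + (1 - t) * ((Y⁻¹ * (Aᵀ * A)).trace)⁻¹
          ≤ (((t • X + (1 - t) • Y)⁻¹ * (Aᵀ * A)).trace)⁻¹ := by
  intro X Y hX hY t ht₀ ht₁
  have hZ := hX.smul_add_one_sub_smul hY ht₀ ht₁
  set Z := t • X + (1 - t) • Y
  set B := Aᵀ * A
  set s := (Z⁻¹ * B).trace
  have hs : s ≠ 0 := (trace_inv_mul_transpose_mul_self_pos hZ hA).ne'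
  have hlin : (Z⁻¹ * Z * Z⁻¹ * B).trace
      = t * (Z⁻¹ * X * Z⁻¹ * B).trace + (1 - t) * (Z⁻¹ * Y * Z⁻¹ * B).trace := by
    simp only [Z, Matrix.mul_add, Matrix.add_mul, Matrix.mul_smul, Matrix.smul_mul, trace_add,
      trace_smul, smul_eq_mul]
  calc t * ((X⁻¹ * B).trace)⁻¹ + (1 - t) * ((Y⁻¹ * B).trace)⁻¹
      ≤ t * ((Z⁻¹ * X * Z⁻¹ * B).trace / s ^ 2)
          + (1 - t) * ((Z⁻¹ * Y * Z⁻¹ * B).trace / s ^ 2) := by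
        gcongr
        · exact inv_trace_inv_mul_le hX hZ hA
        · exact inv_trace_inv_mul_le hY hZ hA
    _ = (Z⁻¹ * Z * Z⁻¹ * B).trace / s ^ 2 := by rw [hlin]; ring
    _ = s / s ^ 2 := by
        rw [nonsing_inv_mul Z ((isUnit_iff_isUnit_det Z).mp hZ.isUnit), Matrix.one_mul]
    _ = s⁻¹ := by field_simp
end

section
/- Let A be a fixed d×p matrix with A^T A ≠ 0, and let X_1,...,X_k be n_i×p matrices such that each X_i^T X_i is positive definite. Then tr[(sum_i X_i^T X_i)^{-1} A^T A] · sum_{i=1}^k 1/tr[(X_i^T X_i)^{-1} A^T A] ≤ 1. -/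
/-!
For positive definite `S`, Cauchy–Schwarz for the inner product `⟨u, v⟩ = tr(uᵀ S v)`, applied to
`u` and `S⁻¹ Aᵀ`, gives `tr(A u)² ≤ tr(uᵀ S u) · tr(S⁻¹ AᵀA)`, with equality at `u = S⁻¹ Aᵀ`.
So `1 / tr(S⁻¹ AᵀA)` is the minimum of the quadratic forms `tr(uᵀ S u)` over `tr(A u) = 1`,
hence concave and superadditive in `S`. Concretely, testing every `Sᵢ` with the minimiser
`u = (∑ Sᵢ)⁻¹ Aᵀ` of the sum and writing `T = tr((∑ Sᵢ)⁻¹ AᵀA)` gives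
`T² · ∑ 1 / tr(Sᵢ⁻¹ AᵀA) ≤ ∑ tr(uᵀ Sᵢ u) = T`.
-/

open Matrix

namespace Matrix

variable {ι m n : Type*} [Fintype ι] [Fintype m] [Fintype n]

theorem nonsing_inv_mul_mul_nonsing_inv {α : Type*} [CommRing α] [DecidableEq m]
    (S : Matrix m m α) :
    S⁻¹ * S * S⁻¹ = S⁻¹ := by
  by_cases h : IsUnit S.det
  · rw [nonsing_inv_mul _ h, Matrix.one_mul]
  · simp [nonsing_inv_apply_not_isUnit _ h]

theorem IsSymm.trace_transpose_mul_mul_comm {α : Type*} [CommSemiring α] {S : Matrix m m α}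
    (hS : S.IsSymm) (u v : Matrix m n α) : (vᵀ * S * u).trace = (uᵀ * S * v).trace := by
  rw [← trace_transpose]
  simp only [transpose_mul, transpose_transpose, Matrix.mul_assoc, hS.eq]

theorem PosSemidef.sq_trace_transpose_mul_mul_le {S : Matrix m m ℝ} (hS : S.PosSemidef)
    (u v : Matrix m n ℝ) :
    (uᵀ * S * v).trace ^ 2 ≤ (uᵀ * S * u).trace * (vᵀ * S * v).trace := by
  have hquad : ∀ t : ℝ, 0 ≤ (vᵀ * S * v).trace * (t * t) + 2 * (uᵀ * S * v).trace * t
      + (uᵀ * S * u).trace := fun t => by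
    have := (hS.conjTranspose_mul_mul_same (u + t • v)).trace_nonneg
    simp only [conjTranspose_eq_transpose_of_trivial, transpose_add, transpose_smul,
      Matrix.add_mul, Matrix.mul_add, Matrix.smul_mul, Matrix.mul_smul, trace_add, trace_smul,
      (isHermitian_iff_isSymm.mp hS.isHermitian).trace_transpose_mul_mul_comm u v,
      smul_eq_mul] at this
    linarith
  have := discrim_le_zero hquad
  rw [discrim] at this
  nlinarith

theorem PosSemidef.trace_inv_mul_transpose_mul_nonneg [DecidableEq m] {S : Matrix m m ℝ}
    (hS : S.PosSemidef) (A : Matrix n m ℝ) : 0 ≤ (S⁻¹ * (Aᵀ * A)).trace := by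
  rw [← Matrix.mul_assoc, trace_mul_cycle]
  simpa using (hS.inv.mul_mul_conjTranspose_same A).trace_nonneg

theorem PosDef.sq_trace_mul_le_trace_mul_trace_inv [DecidableEq m] {S : Matrix m m ℝ}
    (hS : S.PosDef) (A : Matrix n m ℝ) (u : Matrix m n ℝ) :
    (A * u).trace ^ 2 ≤ (uᵀ * S * u).trace * (S⁻¹ * (Aᵀ * A)).trace := by
  have hdet : IsUnit S.det := hS.isUnit.map detMonoidHom
  have hinv : (S⁻¹)ᵀ = S⁻¹ := (isHermitian_iff_isSymm.mp hS.inv.isHermitian).eq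
  have hcross : (uᵀ * S * (S⁻¹ * Aᵀ)).trace = (A * u).trace := by
    rw [← Matrix.mul_assoc, mul_nonsing_inv_cancel_right _ _ hdet, ← transpose_mul,
      trace_transpose]
  have hself : ((S⁻¹ * Aᵀ)ᵀ * S * (S⁻¹ * Aᵀ)).trace = (S⁻¹ * (Aᵀ * A)).trace := by
    rw [transpose_mul, transpose_transpose, hinv, ← Matrix.mul_assoc,
      Matrix.mul_assoc A, nonsing_inv_mul _ hdet, Matrix.mul_one, trace_mul_cycle, trace_mul_comm]
  simpa only [hcross, hself] using hS.posSemidef.sq_trace_transpose_mul_mul_le u (S⁻¹ * Aᵀ)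

theorem trace_inv_sum_mul_sum_inv_trace_le_one [DecidableEq m] (S : ι → Matrix m m ℝ)
    (hS : ∀ i, (S i).PosDef) (A : Matrix n m ℝ) :
    ((∑ i, S i)⁻¹ * (Aᵀ * A)).trace * ∑ i, ((S i)⁻¹ * (Aᵀ * A)).trace⁻¹ ≤ 1 := by
  set Ssum := ∑ i, S i
  set T := (Ssum⁻¹ * (Aᵀ * A)).trace
  have hSsum : Ssum.PosSemidef := posSemidef_sum _ fun i _ => (hS i).posSemidef
  have hT : 0 ≤ T := hSsum.trace_inv_mul_transpose_mul_nonneg A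
  set u := Ssum⁻¹ * Aᵀ
  have hAu : (A * u).trace = T := by rw [trace_mul_comm, Matrix.mul_assoc]
  have huu : (uᵀ * Ssum * u).trace = T := by
    have hinv : (Ssum⁻¹)ᵀ = Ssum⁻¹ := (isHermitian_iff_isSymm.mp hSsum.inv.isHermitian).eq
    rw [show uᵀ * Ssum * u = A * (Ssum⁻¹ * Ssum * Ssum⁻¹) * Aᵀ by
        simp only [u, transpose_mul, transpose_transpose, hinv, Matrix.mul_assoc],
      nonsing_inv_mul_mul_nonsing_inv, Matrix.mul_assoc, hAu]
  have hterm : ∀ i, T ^ 2 * ((S i)⁻¹ * (Aᵀ * A)).trace⁻¹ ≤ (uᵀ * S i * u).trace := fun i => by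
    rw [← div_eq_mul_inv]
    refine div_le_of_le_mul₀ ((hS i).posSemidef.trace_inv_mul_transpose_mul_nonneg A)
      ((hS i).posSemidef.conjTranspose_mul_mul_same u).trace_nonneg ?_
    simpa only [hAu] using (hS i).sq_trace_mul_le_trace_mul_trace_inv A u
  have hsum : T * (T * ∑ i, ((S i)⁻¹ * (Aᵀ * A)).trace⁻¹) ≤ T * 1 :=
    calc T * (T * ∑ i, ((S i)⁻¹ * (Aᵀ * A)).trace⁻¹)
        = ∑ i, T ^ 2 * ((S i)⁻¹ * (Aᵀ * A)).trace⁻¹ := by rw [← mul_assoc, ← sq, Finset.mul_sum]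
      _ ≤ ∑ i, (uᵀ * S i * u).trace := Finset.sum_le_sum fun i _ => hterm i
      _ = T * 1 := by rw [← trace_sum, ← Matrix.sum_mul, ← Matrix.mul_sum, huu, mul_one]
  rcases hT.eq_or_lt with hT0 | hTpos
  · rw [← hT0, zero_mul]; exact zero_le_one
  · exact le_of_mul_le_mul_left hsum hTpos

end Matrix

theorem relative_efficiency_le_one_general (p d k : ℕ) (n : Fin k → ℕ)
    (A : Matrix (Fin d) (Fin p) ℝ)
    (X : ∀ i : Fin k, Matrix (Fin (n i)) (Fin p) ℝ)
    (hX : ∀ i, ((X i)ᵀ * X i).PosDef) :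
    (((∑ i, (X i)ᵀ * X i)⁻¹ * (Aᵀ * A)).trace) *
      (∑ i, ((((X i)ᵀ * X i)⁻¹ * (Aᵀ * A)).trace)⁻¹) ≤ 1 :=
  trace_inv_sum_mul_sum_inv_trace_le_one (fun i => (X i)ᵀ * X i) hX A

/-- The relative efficiency of distributed least squares is at most one:
`tr[(∑ XᵢᵀXᵢ)⁻¹ AᵀA] · ∑ 1/tr[(XᵢᵀXᵢ)⁻¹ AᵀA] ≤ 1`. -/
theorem relative_efficiency_le_one (p d k : ℕ) (n : Fin k → ℕ)
    (A : Matrix (Fin d) (Fin p) ℝ) (hA : Aᵀ * A ≠ 0)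
    (X : ∀ i : Fin k, Matrix (Fin (n i)) (Fin p) ℝ)
    (hX : ∀ i, ((X i)ᵀ * X i).PosDef) :
    (((∑ i, (X i)ᵀ * X i)⁻¹ * (Aᵀ * A)).trace) *
      (∑ i, ((((X i)ᵀ * X i)⁻¹ * (Aᵀ * A)).trace)⁻¹) ≤ 1 :=
  relative_efficiency_le_one_general p d k n A X hX
end

section
/- Let X be symmetric positive definite and V symmetric such that X + tV is positive definite for t in an interval I containing 0. Write the eigendecomposition X^{-1/2} V X^{-1/2} = Q Λ Q^T with eigenvalues λ_i, and set α_i = (Q^T X^{-1} Q)_{ii} > 0. Then g(t) = 1/tr[(X+tV)^{-1}] satisfies g(t) = (sum_i α_i/(1 + t λ_i))^{-1}, and g''(t) ≤ 0 on I. -/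
/-!
Conjugating by `R Q` turns `X + tV` into `diag (1 + tλᵢ)`, so positive definiteness gives
`1 + tλᵢ > 0` and `tr (X + tV)⁻¹ = ∑ αᵢ / (1 + tλᵢ) =: F t`. For `g = 1 / F` one has
`g'' = (2 F'² - F F'') / F³`, and with `uᵢ = 1 / (1 + tλᵢ) > 0` the sign condition
`(∑ αᵢ λᵢ uᵢ²)² ≤ (∑ αᵢ uᵢ) (∑ αᵢ λᵢ² uᵢ³)` is the Cauchy–Schwarz inequality.
-/

open Matrix Filter Topology

section LinearAlgebra

variable {n K : Type*} [Fintype n] [DecidableEq n] [Field K]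

theorem mul_self_add_smul_eq_mul_diagonal_mul {R Q V : Matrix n n K} {lam : n → K}
    (hR : IsUnit R.det) (hQ : Q * Qᵀ = 1) (h : R⁻¹ * V * R⁻¹ = Q * diagonal lam * Qᵀ)
    (t : K) :
    R * R + t • V = R * Q * diagonal (fun i => 1 + t * lam i) * (Qᵀ * R) := by
  have hV : V = R * (Q * diagonal lam * Qᵀ) * R := by
    rw [← h]
    simp only [Matrix.mul_assoc, nonsing_inv_mul _ hR, Matrix.mul_one]
    simp only [← Matrix.mul_assoc, mul_nonsing_inv _ hR, Matrix.one_mul]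
  have hD : diagonal (fun i => 1 + t * lam i) = 1 + t • diagonal lam := by
    rw [← diagonal_one, ← diagonal_smul, diagonal_add]
    rfl
  rw [hD, hV]
  simp only [Matrix.mul_add, Matrix.add_mul, Matrix.mul_smul, Matrix.smul_mul, Matrix.mul_one,
    Matrix.mul_assoc]
  simp only [← Matrix.mul_assoc, hQ, Matrix.one_mul]

theorem inv_diagonal_of_ne_zero {d : n → K} (hd : ∀ i, d i ≠ 0) :
    (diagonal d)⁻¹ = diagonal fun i => (d i)⁻¹ :=
  inv_eq_left_inv <| by simp [diagonal_mul_diagonal, hd]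

theorem trace_inv_mul_diagonal_mul (M N : Matrix n n K) {d : n → K} (hd : ∀ i, d i ≠ 0) :
    (M * diagonal d * N)⁻¹.trace = ∑ i, (N * M)⁻¹ i i / d i := by
  rw [Matrix.mul_inv_rev, Matrix.mul_inv_rev, inv_diagonal_of_ne_zero hd, ← Matrix.mul_assoc,
    trace_mul_cycle, ← Matrix.mul_inv_rev]
  simp [trace, mul_diagonal, div_eq_mul_inv]

end LinearAlgebra

section RealMatrix

variable {n : Type*} [Fintype n] [DecidableEq n] {U : Matrix n n ℝ}

theorem posDef_transpose_mul_mul {A : Matrix n n ℝ} (hA : A.PosDef) (hU : IsUnit U) :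
    (Uᵀ * A * U).PosDef := by
  rw [← conjTranspose_eq_transpose_of_trivial, ← star_eq_conjTranspose]
  exact hU.posDef_star_left_conjugate_iff.mpr hA

theorem pos_of_posDef_mul_diagonal_mul_transpose (hU : IsUnit U) {d : n → ℝ}
    (h : (U * diagonal d * Uᵀ).PosDef) (i : n) : 0 < d i := by
  rw [← conjTranspose_eq_transpose_of_trivial, ← star_eq_conjTranspose,
    IsUnit.posDef_star_right_conjugate_iff hU, posDef_diagonal_iff] at h
  exact h i

end RealMatrix

section Calculus

theorem deriv_deriv_inv_eq {F F' F'' : ℝ → ℝ} {s : Set ℝ} (hs : IsOpen s)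
    (hF : ∀ u ∈ s, HasDerivAt F (F' u) u) (hF' : ∀ u ∈ s, HasDerivAt F' (F'' u) u)
    (hF0 : ∀ u ∈ s, F u ≠ 0) {t : ℝ} (ht : t ∈ s) :
    deriv (deriv fun u => (F u)⁻¹) t = (2 * F' t ^ 2 - F t * F'' t) / F t ^ 3 := by
  have hfirst : deriv (fun u => (F u)⁻¹) =ᶠ[𝓝 t] fun u => -F' u / F u ^ 2 := by
    filter_upwards [hs.mem_nhds ht] with u hu
    exact ((hF u hu).inv (hF0 u hu)).deriv
  rw [hfirst.deriv_eq,
    ((hF' t ht).fun_neg.fun_div ((hF t ht).fun_pow 2) (pow_ne_zero 2 (hF0 t ht))).deriv]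
  have := hF0 t ht
  field_simp
  ring

variable {ι : Type*} [Fintype ι]

theorem hasDerivAt_sum_div_one_add_mul_pow (c l : ι → ℝ) (n : ℕ) {u : ℝ}
    (hu : ∀ i, 1 + u * l i ≠ 0) :
    HasDerivAt (fun v => ∑ i, c i / (1 + v * l i) ^ n)
      (∑ i, -(n * c i * l i) / (1 + u * l i) ^ (n + 1)) u := by
  refine HasDerivAt.fun_sum fun i _ => ?_
  have hlin : HasDerivAt (fun v => 1 + v * l i) (l i) u := by
    simpa using ((hasDerivAt_id u).mul_const (l i)).const_add 1
  cases n with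
  | zero => simpa using hasDerivAt_const u (c i)
  | succ n =>
    refine ((hasDerivAt_const u (c i)).fun_div (hlin.fun_pow (n + 1))
      (pow_ne_zero _ (hu i))).congr_deriv ?_
    have := hu i
    rw [Nat.add_sub_cancel]
    field_simp
    push_cast
    ring

theorem sq_sum_div_sq_le_mul_sum {α l : ι → ℝ} {t : ℝ} (hα : ∀ i, 0 ≤ α i)
    (hpos : ∀ i, 0 < 1 + t * l i) :
    (∑ i, α i * l i / (1 + t * l i) ^ 2) ^ 2 ≤
      (∑ i, α i / (1 + t * l i)) * ∑ i, α i * l i ^ 2 / (1 + t * l i) ^ 3 := by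
  refine Finset.sum_sq_le_sum_mul_sum_of_sq_le_mul _
    (fun i _ => div_nonneg (hα i) (hpos i).le)
    (fun i _ => div_nonneg (mul_nonneg (hα i) (sq_nonneg _)) (pow_pos (hpos i) 3).le)
    (fun i _ => le_of_eq ?_)
  have := (hpos i).ne'
  field_simp

theorem deriv_deriv_inv_sum_div_nonpos {α l : ι → ℝ} (hα : ∀ i, 0 < α i) {s : Set ℝ}
    (hs : IsOpen s) (hpos : ∀ u ∈ s, ∀ i, 0 < 1 + u * l i) {t : ℝ} (ht : t ∈ s) :
    deriv (deriv fun u => (∑ i, α i / (1 + u * l i))⁻¹) t ≤ 0 := by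
  rcases isEmpty_or_nonempty ι with _ | _
  · simp
  have hF : ∀ u ∈ s, HasDerivAt (fun v => ∑ i, α i / (1 + v * l i))
      (-∑ i, α i * l i / (1 + u * l i) ^ 2) u := fun u hu => by
    simpa [neg_div] using hasDerivAt_sum_div_one_add_mul_pow α l 1 fun i => (hpos u hu i).ne'
  have hF' : ∀ u ∈ s, HasDerivAt (fun v => -∑ i, α i * l i / (1 + v * l i) ^ 2)
      (2 * ∑ i, α i * l i ^ 2 / (1 + u * l i) ^ 3) u := fun u hu => by
    refine (hasDerivAt_sum_div_one_add_mul_pow (fun i => α i * l i) l 2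
      fun i => (hpos u hu i).ne').fun_neg.congr_deriv ?_
    rw [Finset.mul_sum, ← Finset.sum_neg_distrib]
    refine Finset.sum_congr rfl fun i _ => ?_
    push_cast
    ring
  have hFpos : ∀ u ∈ s, 0 < ∑ i, α i / (1 + u * l i) := fun u hu =>
    Finset.sum_pos (fun i _ => div_pos (hα i) (hpos u hu i)) Finset.univ_nonempty
  rw [deriv_deriv_inv_eq hs hF hF' (fun u hu => (hFpos u hu).ne') ht]
  have hcs := sq_sum_div_sq_le_mul_sum (fun i => (hα i).le) (hpos t ht)
  apply div_nonpos_of_nonpos_of_nonneg _ (pow_pos (hFpos t ht) 3).le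
  nlinarith

end Calculus

theorem one_dim_restriction_concave_general (p : ℕ)
    (X V R Q : Matrix (Fin p) (Fin p) ℝ) (lam : Fin p → ℝ)
    (hX : X.PosDef)
    (hR : R.PosDef) (hRX : R * R = X)
    (hQ : Q * Qᵀ = 1)
    (hdecomp : R⁻¹ * V * R⁻¹ = Q * Matrix.diagonal lam * Qᵀ)
    (α : Fin p → ℝ) (hα : ∀ i, α i = (Qᵀ * X⁻¹ * Q) i i)
    (a b : ℝ)
    (hI : ∀ t ∈ Set.Ioo a b, (X + t • V).PosDef)
    (g : ℝ → ℝ) (hg : ∀ t, g t = (((X + t • V)⁻¹).trace)⁻¹) :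
    (∀ i, 0 < α i) ∧
    (∀ t ∈ Set.Ioo a b, g t = (∑ i, α i / (1 + t * lam i))⁻¹) ∧
    (∀ t ∈ Set.Ioo a b, deriv (deriv g) t ≤ 0) := by
  have hQu : IsUnit Q := (isUnit_iff_isUnit_det Q).mpr (isUnit_det_of_right_inverse hQ)
  have hRQ : (R * Q)ᵀ = Qᵀ * R := by
    rw [transpose_mul, ← conjTranspose_eq_transpose_of_trivial R, hR.isHermitian.eq]
  have hconj (t : ℝ) : X + t • V = R * Q * diagonal (fun i => 1 + t * lam i) * (R * Q)ᵀ := by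
    rw [← hRX, hRQ, mul_self_add_smul_eq_mul_diagonal_mul
      ((isUnit_iff_isUnit_det R).mp hR.isUnit) hQ hdecomp]
  have hpos : ∀ t ∈ Set.Ioo a b, ∀ i, 0 < 1 + t * lam i := fun t ht =>
    pos_of_posDef_mul_diagonal_mul_transpose (hR.isUnit.mul hQu) (hconj t ▸ hI t ht)
  have hα_pos : ∀ i, 0 < α i := fun i =>
    hα i ▸ (posDef_transpose_mul_mul hX.inv hQu).diag_pos
  have hQRRQ : (Qᵀ * R * (R * Q))⁻¹ = Qᵀ * X⁻¹ * Q := by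
    rw [Matrix.mul_assoc, ← Matrix.mul_assoc R, hRX, Matrix.mul_inv_rev, Matrix.mul_inv_rev,
      inv_eq_right_inv hQ, inv_eq_left_inv hQ, Matrix.mul_assoc]
  have hsum : ∀ t ∈ Set.Ioo a b, g t = (∑ i, α i / (1 + t * lam i))⁻¹ := fun t ht => by
    rw [hg, hconj, trace_inv_mul_diagonal_mul _ _ fun i => (hpos t ht i).ne', hRQ, hQRRQ]
    simp only [hα]
  refine ⟨hα_pos, hsum, fun t ht => ?_⟩
  have hgeq : g =ᶠ[𝓝 t] fun u => (∑ i, α i / (1 + u * lam i))⁻¹ :=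
    eventually_of_mem (isOpen_Ioo.mem_nhds ht) hsum
  rw [hgeq.deriv.deriv_eq]
  exact deriv_deriv_inv_sum_div_nonpos hα_pos isOpen_Ioo hpos ht

/-- One-dimensional restriction used to prove concavity of `X ↦ 1/tr(X⁻¹)`:
with `X^{-1/2} V X^{-1/2} = Q Λ Qᵀ` and `αᵢ = (Qᵀ X⁻¹ Q)ᵢᵢ`, the function
`g(t) = 1/tr[(X+tV)⁻¹]` equals `(∑ αᵢ/(1+tλᵢ))⁻¹` and is concave (`g'' ≤ 0`)
on an open interval around `0` where `X + tV` is positive definite. -/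
theorem one_dim_restriction_concave (p : ℕ)
    (X V R Q : Matrix (Fin p) (Fin p) ℝ) (lam : Fin p → ℝ)
    (hX : X.PosDef) (hV : V.IsSymm)
    (hR : R.PosDef) (hRX : R * R = X)
    (hQ : Q * Qᵀ = 1) (hQ' : Qᵀ * Q = 1)
    (hdecomp : R⁻¹ * V * R⁻¹ = Q * Matrix.diagonal lam * Qᵀ)
    (α : Fin p → ℝ) (hα : ∀ i, α i = (Qᵀ * X⁻¹ * Q) i i)
    (a b : ℝ) (ha : a < 0) (hb : 0 < b)
    (hI : ∀ t ∈ Set.Ioo a b, (X + t • V).PosDef)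
    (g : ℝ → ℝ) (hg : ∀ t, g t = (((X + t • V)⁻¹).trace)⁻¹) :
    (∀ i, 0 < α i) ∧
    (∀ t ∈ Set.Ioo a b, g t = (∑ i, α i / (1 + t * lam i))⁻¹) ∧
    (∀ t ∈ Set.Ioo a b, deriv (deriv g) t ≤ 0) :=
  one_dim_restriction_concave_general p X V R Q lam hX hR hRX hQ hdecomp α hα a b hI g hg
end

section
/- Let Σ be symmetric positive semidefinite and ρ > 0. The block matrix M = [[(Σ+ρI)^{-3}Σ, (Σ+ρI)^{-2}Σ],[(Σ+ρI)^{-2}Σ, (Σ+ρI)^{-1}Σ]] is positive semidefinite. -/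
/-!
With `A = (Σ + ρI)⁻¹`, which is positive definite and commutes with `Σ`, the block matrix is
`L (A Σ) Lᴴ` for the `2p × p` matrix `L = [A; I]`, and `A Σ` is positive semidefinite as a product
of commuting positive semidefinite matrices.
-/

open Matrix

namespace Matrix

open scoped ComplexOrder MatrixOrder in
theorem PosSemidef.mul_of_commute {n 𝕜 : Type*} [Fintype n] [DecidableEq n] [RCLike 𝕜]
    {A B : Matrix n n 𝕜} (hA : A.PosSemidef) (hB : B.PosSemidef) (h : Commute A B) :
    (A * B).PosSemidef :=
  (h.mul_nonneg hA.nonneg hB.nonneg).posSemidef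

theorem commute_nonsing_inv_right {n R : Type*} [Fintype n] [DecidableEq n] [CommRing R]
    {A B : Matrix n n R} (h : Commute A B) : Commute A B⁻¹ := by
  by_cases hB : IsUnit B.det
  · let _ := B.invertibleOfIsUnitDet hB
    rw [← invOf_eq_nonsing_inv]
    exact h.invOf_right
  · rw [nonsing_inv_apply_not_isUnit B hB]
    exact Commute.zero_right A

theorem PosSemidef.fromBlocks_mul_mul_conjTranspose {m n R : Type*} [Finite m] [Fintype n]
    [DecidableEq n] [Ring R] [PartialOrder R] [StarRing R] {X : Matrix n n R}
    (hX : X.PosSemidef) (B : Matrix m n R) :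
    (fromBlocks (B * X * Bᴴ) (B * X) (X * Bᴴ) X).PosSemidef := by
  have := Fintype.ofFinite m
  have h := hX.mul_mul_conjTranspose_same (fromRows B (1 : Matrix n n R))
  rw [conjTranspose_fromRows_eq_fromCols_conjTranspose, fromRows_mul, fromRows_mul_fromCols,
    conjTranspose_one] at h
  simpa only [Matrix.one_mul, Matrix.mul_one] using h

end Matrix

/-- The block matrix `[[(Σ+ρI)⁻³Σ, (Σ+ρI)⁻²Σ],[(Σ+ρI)⁻²Σ, (Σ+ρI)⁻¹Σ]]` is
positive semidefinite for positive semidefinite `Σ` and `ρ > 0`. -/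
theorem block_matrix_psd (p : ℕ) (S : Matrix (Fin p) (Fin p) ℝ)
    (hS : S.PosSemidef) (ρ : ℝ) (hρ : 0 < ρ) :
    (Matrix.fromBlocks
      ((S + ρ • 1)⁻¹ ^ 3 * S) ((S + ρ • 1)⁻¹ ^ 2 * S)
      ((S + ρ • 1)⁻¹ ^ 2 * S) ((S + ρ • 1)⁻¹ * S)).PosSemidef := by
  set A := (S + ρ • 1)⁻¹
  have hA : A.PosDef := (PosDef.posSemidef_add hS (PosDef.one.smul hρ)).inv
  have hSA : Commute S A :=
    commute_nonsing_inv_right ((Commute.refl S).add_right ((Commute.one_right S).smul_right ρ))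
  have hAS : (A * S).PosSemidef := hA.posSemidef.mul_of_commute hS hSA.symm
  simpa only [pow_succ, pow_zero, Matrix.one_mul, mul_assoc, hA.isHermitian.eq, hSA.eq] using
    hAS.fromBlocks_mul_mul_conjTranspose A
end

section
/- Fix γ ∈ (0,1) and define OE(k) = 1/(1 + (k-1)γ²/(1 - kγ)) for real k ∈ [1, 1/γ). Then OE is decreasing in k, OE(1) = 1, and the largest k with OE(k) ≥ 1/2 equals (γ² + 1)/(γ² + γ). -/
/-!
Write `OE k = 1 / (1 + g k)` with `g k = (k - 1) γ² / (1 - k γ)`. On `[1, 1/γ)` the ratio `g` is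
nonnegative and increasing (this uses `γ ≤ 1`), while `x ↦ 1 / (1 + x)` is decreasing, so `OE`
is decreasing. Moreover `OE k ≥ 1/2` exactly when `g k ≤ 1`, i.e. when `(k - 1) γ² ≤ 1 - k γ`,
which is linear in `k` and solves to `k ≤ (γ² + 1) / (γ² + γ)`.
-/

open Set

lemma antitoneOn_one_div_one_add : AntitoneOn (fun x : ℝ => 1 / (1 + x)) (Ioi (-1)) := by
  intro x hx y _ hxy
  have : (0 : ℝ) < 1 + x := by linarith [mem_Ioi.mp hx]
  exact one_div_le_one_div_of_le this (by linarith)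

lemma half_le_one_div_one_add_iff {x : ℝ} (hx : -1 < x) : 1 / 2 ≤ 1 / (1 + x) ↔ x ≤ 1 := by
  rw [div_le_div_iff₀ two_pos (by linarith)]
  constructor <;> intro h <;> linarith

lemma monotoneOn_sub_one_mul_div_one_sub_mul {γ c : ℝ} (hγ0 : 0 < γ) (hγ1 : γ ≤ 1)
    (hc : 0 ≤ c) : MonotoneOn (fun k => (k - 1) * c / (1 - k * γ)) (Iio (1 / γ)) := by
  intro a ha b hb hab
  have ha' : 0 < 1 - a * γ := sub_pos.mpr ((lt_div_iff₀ hγ0).mp ha)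
  have hb' : 0 < 1 - b * γ := sub_pos.mpr ((lt_div_iff₀ hγ0).mp hb)
  rw [div_le_div_iff₀ ha' hb']
  -- the difference of the two sides is `c (b - a) (1 - γ)`
  nlinarith [mul_nonneg (mul_nonneg hc (sub_nonneg.mpr hab)) (sub_nonneg.mpr hγ1)]

lemma sub_one_mul_div_one_sub_mul_le_one_iff {γ c k : ℝ} (hk : k * γ < 1) :
    (k - 1) * c / (1 - k * γ) ≤ 1 ↔ k * (c + γ) ≤ c + 1 := by
  rw [div_le_one (sub_pos.mpr hk)]
  constructor <;> intro h <;> linarith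

lemma div_mem_Ico_one_inv {γ : ℝ} (hγ0 : 0 < γ) (hγ1 : γ < 1) :
    (γ ^ 2 + 1) / (γ ^ 2 + γ) ∈ Ico 1 (1 / γ) := by
  constructor
  · rw [le_div_iff₀ (by positivity)]
    linarith
  · rw [div_lt_div_iff₀ (by positivity) hγ0]
    nlinarith [mul_pos (pow_pos hγ0 2) (sub_pos.mpr hγ1)]

/-- For `γ ∈ (0,1)` and `OE(k) = 1/(1+(k-1)γ²/(1-kγ))` on `[1, 1/γ)`: `OE` is
decreasing, `OE(1)=1`, and the largest `k` with `OE(k) ≥ 1/2` is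
`(γ²+1)/(γ²+γ)`. -/
theorem OE_properties (γ : ℝ) (hγ0 : 0 < γ) (hγ1 : γ < 1)
    (OE : ℝ → ℝ) (hOE : ∀ k, OE k = 1 / (1 + (k - 1) * γ ^ 2 / (1 - k * γ))) :
    AntitoneOn OE (Set.Ico 1 (1/γ)) ∧
    OE 1 = 1 ∧
    IsGreatest {k | k ∈ Set.Ico 1 (1/γ) ∧ 1/2 ≤ OE k}
      ((γ ^ 2 + 1) / (γ ^ 2 + γ)) := by
  set g : ℝ → ℝ := fun k => (k - 1) * γ ^ 2 / (1 - k * γ)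
  have hOE_comp : OE = (fun x => 1 / (1 + x)) ∘ g := funext hOE
  have hkγ : ∀ k ∈ Ico 1 (1 / γ), k * γ < 1 := fun k hk => (lt_div_iff₀ hγ0).mp hk.2
  have hg_gt_neg_one : ∀ k ∈ Ico 1 (1 / γ), -1 < g k := fun k hk =>
    lt_of_lt_of_le neg_one_lt_zero
      (div_nonneg (mul_nonneg (sub_nonneg.mpr hk.1) (sq_nonneg γ)) (sub_nonneg.mpr (hkγ k hk).le))
  have half_le_iff : ∀ k ∈ Ico 1 (1 / γ), 1 / 2 ≤ OE k ↔ k ≤ (γ ^ 2 + 1) / (γ ^ 2 + γ) := by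
    intro k hk
    rw [hOE, half_le_one_div_one_add_iff (hg_gt_neg_one k hk),
      sub_one_mul_div_one_sub_mul_le_one_iff (hkγ k hk), le_div_iff₀ (by positivity)]
  refine ⟨?_, by simp [hOE], ?_⟩
  · rw [hOE_comp]
    exact antitoneOn_one_div_one_add.comp_MonotoneOn
      ((monotoneOn_sub_one_mul_div_one_sub_mul hγ0 hγ1.le (sq_nonneg γ)).mono Ico_subset_Iio_self)
      hg_gt_neg_one
  · have hmem := div_mem_Ico_one_inv hγ0 hγ1
    exact ⟨⟨hmem, (half_le_iff _ hmem).mpr le_rfl⟩,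
      fun k ⟨hk, hhalf⟩ => (half_le_iff k hk).mp hhalf⟩
end
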